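/- arXiv:1704.04376 — 2 statements merged into one kernel-verified Lean document; each statement's English description precedes it below -/
import Mathlib

section
/- The inverse moment of the Marchenko–Pastur-type measure equals 1/(ρ̃ − 1): ∫ x^{-1} dμ_mp(x) = ∫_{λ₋}^{λ₊} √((λ₊ − x)(x − λ₋)) / (2π x²) dx = 1/(ρ̃ − 1). (This is the value S_{μ_mp}(0) of the Stieltjes transform at z = 0, the key step in the appendix proof of equation (4) of Lemma 1.) -/
/-!
For `0 < a < b` the function `√((b - x)(x - a)) / x²` has the elementary primitive
`(a + b) / (2√(ab)) · arcsin (((a + b)x - 2ab) / ((b - a)x)) - arcsin ((2x - (a + b)) / (b - a))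
  - √((b - x)(x - a)) / x`,
whose two arcsine arguments both map `[a, b]` onto `[-1, 1]`; hence
`∫_a^b √((b - x)(x - a)) / x² dx = π ((a + b) / (2√(ab)) - 1)`.
For `a = (1 - √ρ̃)²`, `b = (1 + √ρ̃)²` we have `a + b = 2(1 + ρ̃)` and `√(ab) = ρ̃ - 1`, giving
`2π / (ρ̃ - 1)`. Dividing the density by `x` turns the `μ_mp`-integral of `x⁻¹` into the same
integral divided by `2π`.
-/

open MeasureTheory Real

theorem HasDerivAt.arcsin_of_one_sub_sq_eq {f : ℝ → ℝ} {f' x c : ℝ} (hf : HasDerivAt f f' x)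
    (hc : 0 < c) (h : 1 - f x ^ 2 = c ^ 2) :
    HasDerivAt (fun y => arcsin (f y)) (f' / c) x := by
  have hne : f x ^ 2 ≠ 1 := fun h1 => by nlinarith
  have := (hasDerivAt_arcsin (fun h => hne (by simp [h])) (fun h => hne (by simp [h]))).comp x hf
  rwa [h, sqrt_sq hc.le, one_div_mul_eq_div] at this

section

variable {a b x : ℝ}

theorem hasDerivAt_arcsin_two_mul_sub_div (hax : a < x) (hxb : x < b) :
    HasDerivAt (fun y => arcsin ((2 * y - (a + b)) / (b - a)))
      (1 / √((b - x) * (x - a))) x := by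
  have hba : 0 < b - a := by linarith
  have hR : 0 < (b - x) * (x - a) := mul_pos (by linarith) (by linarith)
  have hs := sqrt_pos.2 hR
  have hs2 := sq_sqrt hR.le
  have hf : HasDerivAt (fun y => (2 * y - (a + b)) / (b - a)) (2 / (b - a)) x := by
    simpa using (((hasDerivAt_id x).const_mul 2).sub_const (a + b)).div_const (b - a)
  convert hf.arcsin_of_one_sub_sq_eq (c := 2 * √((b - x) * (x - a)) / (b - a)) (by positivity) ?_
    using 1
  · field_simp
  · field_simp
    rw [hs2]; ring

theorem hasDerivAt_arcsin_mul_sub_div_mul (ha : 0 < a) (hax : a < x) (hxb : x < b) :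
    HasDerivAt (fun y => arcsin (((a + b) * y - 2 * (a * b)) / ((b - a) * y)))
      (√(a * b) / (x * √((b - x) * (x - a)))) x := by
  have hx : 0 < x := ha.trans hax
  have hba : 0 < b - a := by linarith
  have hab : 0 < a * b := mul_pos ha (by linarith)
  have hR : 0 < (b - x) * (x - a) := mul_pos (by linarith) (by linarith)
  have hs := sqrt_pos.2 hR
  have hs2 := sq_sqrt hR.le
  have ht := sqrt_pos.2 hab
  have ht2 := sq_sqrt hab.le
  have hf : HasDerivAt (fun y => ((a + b) * y - 2 * (a * b)) / ((b - a) * y))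
      (2 * (a * b) / ((b - a) * x ^ 2)) x := by
    have hn : HasDerivAt (fun y => (a + b) * y - 2 * (a * b)) (a + b) x := by
      simpa using ((hasDerivAt_id x).const_mul (a + b)).sub_const (2 * (a * b))
    have hd : HasDerivAt (fun y => (b - a) * y) (b - a) x := by
      simpa using (hasDerivAt_id x).const_mul (b - a)
    refine (hn.fun_div hd (by positivity)).congr_deriv ?_
    field_simp
    ring
  convert hf.arcsin_of_one_sub_sq_eq
    (c := 2 * √(a * b) * √((b - x) * (x - a)) / ((b - a) * x)) (by positivity) ?_ using 1
  · field_simp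
    exact ht2
  · field_simp
    rw [hs2, ht2]; ring

theorem hasDerivAt_sqrt_mul_div (hax : a < x) (hxb : x < b) (hx : x ≠ 0) :
    HasDerivAt (fun y => √((b - y) * (y - a)) / y)
      (((a + b - 2 * x) / (2 * √((b - x) * (x - a))) * x - √((b - x) * (x - a))) / x ^ 2) x := by
  have hR : 0 < (b - x) * (x - a) := mul_pos (by linarith) (by linarith)
  have hq : HasDerivAt (fun y => (b - y) * (y - a)) (a + b - 2 * x) x := by
    refine (((hasDerivAt_id' x).const_sub b).fun_mul
      ((hasDerivAt_id' x).sub_const a)).congr_deriv ?_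
    ring
  simpa using (hq.sqrt hR.ne').fun_div (hasDerivAt_id' x) hx

theorem hasDerivAt_primitive_sqrt_mul_div_sq (ha : 0 < a) (hx : x ∈ Set.Ioo a b) :
    HasDerivAt (fun y => (a + b) / (2 * √(a * b)) *
        arcsin (((a + b) * y - 2 * (a * b)) / ((b - a) * y))
      - arcsin ((2 * y - (a + b)) / (b - a)) - √((b - y) * (y - a)) / y)
      (√((b - x) * (x - a)) / x ^ 2) x := by
  obtain ⟨hax, hxb⟩ := hx
  have hx : 0 < x := ha.trans hax
  have hab : 0 < a * b := mul_pos ha (by linarith)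
  have hR : 0 < (b - x) * (x - a) := mul_pos (by linarith) (by linarith)
  have hs := sqrt_pos.2 hR
  have hs2 := sq_sqrt hR.le
  have ht := sqrt_pos.2 hab
  refine ((((hasDerivAt_arcsin_mul_sub_div_mul ha hax hxb).const_mul _).sub
    (hasDerivAt_arcsin_two_mul_sub_div hax hxb)).sub
    (hasDerivAt_sqrt_mul_div hax hxb hx.ne')).congr_deriv ?_
  field_simp
  rw [hs2]
  ring

theorem integral_sqrt_mul_div_sq (ha : 0 < a) (hab : a < b) :
    ∫ x in a..b, √((b - x) * (x - a)) / x ^ 2 = π * ((a + b) / (2 * √(a * b)) - 1) := by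
  have hb : 0 < b := ha.trans hab
  have hba : 0 < b - a := sub_pos.2 hab
  have hpos : ∀ y ∈ Set.Icc a b, 0 < y := fun y hy => ha.trans_le hy.1
  rw [intervalIntegral.integral_eq_sub_of_hasDerivAt_of_le hab.le ?cont
    (fun x hx => hasDerivAt_primitive_sqrt_mul_div_sq ha hx) ?int]
  case cont =>
    refine ContinuousOn.sub (ContinuousOn.sub ?_ (by fun_prop)) ?_
    · refine continuousOn_const.mul (continuous_arcsin.comp_continuousOn ?_)
      exact ContinuousOn.div (by fun_prop) (by fun_prop)
        fun y hy => (mul_pos hba (hpos y hy)).ne'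
    · exact ContinuousOn.div (by fun_prop) (by fun_prop) fun y hy => (hpos y hy).ne'
  case int =>
    refine (ContinuousOn.div (by fun_prop) (by fun_prop) fun y hy => ?_).intervalIntegrable_of_Icc
      hab.le
    exact pow_ne_zero 2 (hpos y hy).ne'
  have e1 : ((a + b) * b - 2 * (a * b)) / ((b - a) * b) = 1 := by
    rw [div_eq_one_iff_eq (by positivity)]; ring
  have e2 : (2 * b - (a + b)) / (b - a) = 1 := by
    rw [div_eq_one_iff_eq hba.ne']; ring
  have e3 : ((a + b) * a - 2 * (a * b)) / ((b - a) * a) = -1 := by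
    rw [div_eq_iff (by positivity)]; ring
  have e4 : (2 * a - (a + b)) / (b - a) = -1 := by
    rw [div_eq_iff hba.ne']; ring
  simp only [e1, e2, e3, e4, arcsin_one, arcsin_neg_one, sub_self, zero_mul, mul_zero, sqrt_zero,
    zero_div]
  ring

end

theorem integral_withDensity_ofReal_indicator {α E : Type*} [MeasurableSpace α]
    [NormedAddCommGroup E] [NormedSpace ℝ E] {μ : Measure α} {s : Set α} (hs : MeasurableSet s)
    {f : α → ℝ} (hf : Measurable f) (hf_nonneg : ∀ x ∈ s, 0 ≤ f x) (g : α → E) :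
    ∫ x, g x ∂μ.withDensity (fun x => ENNReal.ofReal (s.indicator f x)) =
      ∫ x in s, f x • g x ∂μ := by
  rw [integral_withDensity_eq_integral_toReal_smul (hf.indicator hs).ennreal_ofReal
    (ae_of_all _ fun _ => ENNReal.ofReal_lt_top), ← integral_indicator hs]
  congr 1 with x
  rw [ENNReal.toReal_ofReal (Set.indicator_nonneg hf_nonneg x), Set.indicator_smul_apply_left]

theorem integral_sqrt_mul_div_sq_marchenkoPastur {ρ : ℝ} (hρ : 1 < ρ) :
    ∫ x in (1 - √ρ) ^ 2..(1 + √ρ) ^ 2,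
      √(((1 + √ρ) ^ 2 - x) * (x - (1 - √ρ) ^ 2)) / x ^ 2 = 2 * π / (ρ - 1) := by
  have hs2 : √ρ ^ 2 = ρ := sq_sqrt (by linarith)
  have hs1 : 1 < √ρ := by simpa using sqrt_lt_sqrt zero_le_one hρ
  have hprod : (1 - √ρ) ^ 2 * (1 + √ρ) ^ 2 = (ρ - 1) ^ 2 := by
    linear_combination (√ρ ^ 2 + ρ - 2) * hs2
  have hsum : (1 - √ρ) ^ 2 + (1 + √ρ) ^ 2 = 2 * (1 + ρ) := by linear_combination 2 * hs2
  rw [integral_sqrt_mul_div_sq (by nlinarith) (by nlinarith), hprod, sqrt_sq (by linarith), hsum]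
  field_simp [show ρ - 1 ≠ 0 by linarith]
  ring

/-- The inverse moment of the Marchenko–Pastur-type measure `μ_mp` with parameter
`ρ̃ > 1` equals `1/(ρ̃ - 1)`:
`∫ x⁻¹ dμ_mp(x) = ∫_{λ₋}^{λ₊} √((λ₊ - x)(x - λ₋)) / (2π x²) dx = 1/(ρ̃ - 1)`.
(This is the value `S_{μ_mp}(0)` of the Stieltjes transform at `z = 0`.) -/
theorem stmt9
    (ρt : ℝ) (hρt : 1 < ρt)
    (lm lp : ℝ) (hlm : lm = (1 - Real.sqrt ρt) ^ 2) (hlp : lp = (1 + Real.sqrt ρt) ^ 2)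
    (μ : Measure ℝ)
    (hμ : μ = volume.withDensity (fun x => ENNReal.ofReal
      (Set.indicator (Set.Icc lm lp)
        (fun y => Real.sqrt ((lp - y) * (y - lm)) / (2 * π * y)) x))) :
    (∫ x, x⁻¹ ∂μ) = 1 / (ρt - 1) ∧
    (∫ x in Set.Icc lm lp, Real.sqrt ((lp - x) * (x - lm)) / (2 * π * x ^ 2)) =
      1 / (ρt - 1) := by
  have hlm_pos : 0 < lm := by
    have : 1 < √ρt := by simpa using sqrt_lt_sqrt zero_le_one hρt
    rw [hlm]; nlinarith
  have hpos : ∀ x ∈ Set.Icc lm lp, 0 < x := fun x hx => hlm_pos.trans_le hx.1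
  have hlm_le : lm ≤ lp := by rw [hlm, hlp]; nlinarith [sqrt_nonneg ρt]
  have hset : ∫ x in Set.Icc lm lp, √((lp - x) * (x - lm)) / (2 * π * x ^ 2) = 1 / (ρt - 1) := by
    rw [integral_Icc_eq_integral_Ioc, ← intervalIntegral.integral_of_le hlm_le]
    simp_rw [mul_comm (2 * π), ← div_div]
    rw [intervalIntegral.integral_div, intervalIntegral.integral_div, hlm, hlp,
      integral_sqrt_mul_div_sq_marchenkoPastur hρt]
    field_simp
  refine ⟨?_, hset⟩
  rw [hμ, integral_withDensity_ofReal_indicator measurableSet_Icc (by fun_prop)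
    (fun x hx => by have := hpos x hx; positivity), ← hset]
  refine setIntegral_congr_fun measurableSet_Icc fun x hx => ?_
  have := (hpos x hx).ne'
  simp only [smul_eq_mul]
  field_simp
end

section
/- The Stieltjes transform of the Marchenko–Pastur-type measure satisfies the quadratic relation: for every z ∈ ℂ with z ∉ [λ₋, λ₊], one has z · S(z)² + (z + 1 − ρ̃) · S(z) + 1 = 0, where S(z) := ∫ (x − z)⁻¹ dμ_mp(x); equivalently, for z ≠ 0 with 1 + S(z) ≠ 0, S(z) = −1/z + (ρ̃/z) · S(z)/(1 + S(z)). -/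
/-!
For real `t > λ₊` the substitutions `x = c + d sin θ` (with `c = 1 + ρ̃`, `d = 2√ρ̃`, so that
`[λ₋, λ₊] = [c - d, c + d]`) and `u = tan (θ / 2)` evaluate the Stieltjes transform in closed form,
`S(t) = (√((t - c)² - d²) - t + ρ̃ - 1) / (2t)`, which is a root of `t s² + (t + 1 - ρ̃) s + 1`.
Off the compact support `S` is holomorphic, and the complement of `[λ₋, λ₊]` in `ℂ` is connected,
so by the identity theorem the quadratic relation propagates from `(λ₊, ∞)` to all of it.
-/

open MeasureTheory Real intervalIntegral Set Filter Topology

theorem sub_mul_sin_pos {v d : ℝ} (hd : |d| < v) (θ : ℝ) : 0 < v - d * sin θ := by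
  have : d * sin θ ≤ |d| :=
    calc d * sin θ ≤ |d * sin θ| := le_abs_self _
      _ = |d| * |sin θ| := abs_mul _ _
      _ ≤ |d| * 1 := by gcongr; exact abs_sin_le_one θ
      _ = |d| := mul_one _
  linarith

theorem hasDerivAt_arctan_tan_half {v d θ : ℝ} (hd : |d| < v) (hθ : θ ∈ Icc (-(π / 2)) (π / 2)) :
    HasDerivAt (fun θ => 2 / √(v ^ 2 - d ^ 2) * arctan ((v * tan (θ / 2) - d) / √(v ^ 2 - d ^ 2)))
      (v - d * sin θ)⁻¹ θ := by
  set s := √(v ^ 2 - d ^ 2)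
  have hs : 0 < s := sqrt_pos.2 (by nlinarith [abs_nonneg d, sq_abs d])
  have hs2 : s ^ 2 = v ^ 2 - d ^ 2 := sq_sqrt (by nlinarith [abs_nonneg d, sq_abs d])
  have hcos : 0 < cos (θ / 2) :=
    cos_pos_of_mem_Ioo ⟨by linarith [hθ.1, pi_pos], by linarith [hθ.2, pi_pos]⟩
  have hhalf : HasDerivAt (fun θ : ℝ => θ / 2) (1 / 2) θ := (hasDerivAt_id θ).div_const 2
  have htan : HasDerivAt (fun θ => tan (θ / 2)) (1 / cos (θ / 2) ^ 2 * (1 / 2)) θ :=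
    HasDerivAt.comp (h₂ := tan) θ (hasDerivAt_tan hcos.ne') hhalf
  refine (((htan.const_mul v).sub_const d).div_const s).arctan.const_mul (2 / s) |>.congr_deriv ?_
  have hden := sub_mul_sin_pos hd θ
  have hsin : sin θ = 2 * sin (θ / 2) * cos (θ / 2) := by
    rw [← sin_two_mul]; ring_nf
  have hpyth := sin_sq_add_cos_sq (θ / 2)
  rw [hsin] at hden ⊢
  rw [tan_eq_sin_div_cos]
  field_simp
  rw [eq_div_iff (by linarith), hs2]
  linear_combination (-v ^ 2) * hpyth

theorem integral_inv_sub_mul_sin {v d : ℝ} (hd : |d| < v) :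
    ∫ θ in (-(π / 2))..(π / 2), (v - d * sin θ)⁻¹ = π / √(v ^ 2 - d ^ 2) := by
  have hcont : Continuous fun θ => (v - d * sin θ)⁻¹ :=
    (continuous_const.sub (continuous_const.mul continuous_sin)).inv₀
      fun θ => (sub_mul_sin_pos hd θ).ne'
  have hle : -(π / 2) ≤ π / 2 := by linarith [pi_pos]
  rw [integral_eq_sub_of_hasDerivAt (fun θ hθ => hasDerivAt_arctan_tan_half hd
    (by rwa [uIcc_of_le hle] at hθ)) (hcont.intervalIntegrable _ _)]
  set s := √(v ^ 2 - d ^ 2)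
  have hs : 0 < s := sqrt_pos.2 (by nlinarith [abs_nonneg d, sq_abs d])
  have hs2 : s ^ 2 = v ^ 2 - d ^ 2 := sq_sqrt (by nlinarith [abs_nonneg d, sq_abs d])
  have hvd : 0 < v - d := by linarith [le_abs_self d]
  have hinv : (v + d) / s = ((v - d) / s)⁻¹ := by
    rw [inv_div, div_eq_div_iff hs.ne' hvd.ne']
    linear_combination -hs2
  rw [show π / 2 / 2 = π / 4 by ring, show -(π / 2) / 2 = -(π / 4) by ring, tan_neg,
    tan_pi_div_four, show v * -1 - d = -(v + d) by ring, neg_div, arctan_neg, hinv,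
    arctan_inv_of_pos (div_pos hvd hs)]
  field_simp
  ring

theorem integral_sqrt_mul_eq_integral_sin {c d : ℝ} (hd : 0 ≤ d) {h : ℝ → ℝ}
    (hh : ContinuousOn h (Icc (c - d) (c + d))) :
    ∫ x in (c - d)..(c + d), √((c + d - x) * (x - (c - d))) * h x
      = ∫ θ in (-(π / 2))..(π / 2), (d * cos θ) ^ 2 * h (c + d * sin θ) := by
  have hle : -(π / 2) ≤ π / 2 := by linarith [pi_pos]
  have hderiv (θ : ℝ) : HasDerivAt (fun θ => c + d * sin θ) (d * cos θ) θ :=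
    ((hasDerivAt_sin θ).const_mul d).const_add c
  have hmaps : MapsTo (fun θ => c + d * sin θ) (uIcc (-(π / 2)) (π / 2)) (Icc (c - d) (c + d)) :=
    fun θ _ => ⟨by nlinarith [neg_one_le_sin θ], by nlinarith [sin_le_one θ]⟩
  have hsqrt : Continuous fun x => √((c + d - x) * (x - (c - d))) := by fun_prop
  have key := integral_deriv_smul_comp' (fun θ _ => hderiv θ) (by fun_prop)
    ((hsqrt.continuousOn.mul hh).mono (image_subset_iff.2 hmaps))
  simp only [sin_neg, sin_pi_div_two, Function.comp_apply, Pi.mul_apply, smul_eq_mul] at key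
  rw [show c + d * -1 = c - d by ring, show c + d * 1 = c + d by ring] at key
  rw [← key]
  refine integral_congr fun θ hθ => ?_
  rw [uIcc_of_le hle] at hθ
  have hcos : 0 ≤ d * cos θ := mul_nonneg hd (cos_nonneg_of_mem_Icc hθ)
  have harg : (c + d - (c + d * sin θ)) * (c + d * sin θ - (c - d)) = (d * cos θ) ^ 2 := by
    linear_combination (-d ^ 2) * sin_sq_add_cos_sq θ
  rw [harg, sqrt_sq hcos]
  ring

theorem integral_sqrt_div_sub_eq {c d t : ℝ} (hd : 0 ≤ d) (ht : t ∉ Icc (c - d) (c + d)) :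
    ∫ x in (c - d)..(c + d), √((c + d - x) * (x - (c - d))) / (t - x)
      = π * (t - c)
        - ((t - c) ^ 2 - d ^ 2) * ∫ θ in (-(π / 2))..(π / 2), (t - c - d * sin θ)⁻¹ := by
  have hmem (θ : ℝ) : c + d * sin θ ∈ Icc (c - d) (c + d) :=
    ⟨by nlinarith [neg_one_le_sin θ], by nlinarith [sin_le_one θ]⟩
  have hne (θ : ℝ) : t - c - d * sin θ ≠ 0 := fun h =>
    ht (by convert hmem θ using 1; linarith)
  have hcont : Continuous fun θ => (t - c - d * sin θ)⁻¹ := by fun_prop (disch := exact hne _)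
  conv_lhs => simp only [div_eq_mul_inv]
  rw [integral_sqrt_mul_eq_integral_sin hd (h := fun x => (t - x)⁻¹)
    (ContinuousOn.inv₀ (f := fun x => t - x) (by fun_prop)
      fun x hx => sub_ne_zero.2 fun h => ht (h ▸ hx))]
  have hsplit (θ : ℝ) : (d * cos θ) ^ 2 * (t - (c + d * sin θ))⁻¹
      = (t - c) + d * sin θ - ((t - c) ^ 2 - d ^ 2) * (t - c - d * sin θ)⁻¹ := by
    rw [show t - (c + d * sin θ) = t - c - d * sin θ by ring]
    field_simp [hne θ]
    linear_combination d ^ 2 * sin_sq_add_cos_sq θ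
  simp_rw [hsplit]
  rw [integral_sub (Continuous.intervalIntegrable (by fun_prop) _ _)
      ((hcont.intervalIntegrable _ _).const_mul _),
    integral_add (Continuous.intervalIntegrable (by fun_prop) _ _)
      (Continuous.intervalIntegrable (by fun_prop) _ _),
    intervalIntegral.integral_const, intervalIntegral.integral_const_mul,
    intervalIntegral.integral_const_mul, integral_sin, cos_neg, sub_self, mul_zero, smul_eq_mul]
  ring

theorem integral_sqrt_div_sub_of_lt {c d t : ℝ} (hd : 0 ≤ d) (ht : c + d < t) :
    ∫ x in (c - d)..(c + d), √((c + d - x) * (x - (c - d))) / (t - x)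
      = π * (t - c - √((t - c) ^ 2 - d ^ 2)) := by
  rw [integral_sqrt_div_sub_eq hd fun h => h.2.not_gt ht,
    integral_inv_sub_mul_sin (by rw [abs_of_nonneg hd]; linarith), mul_div_left_comm, div_sqrt]
  ring

theorem integral_sqrt_div_sub_of_gt {c d t : ℝ} (hd : 0 ≤ d) (ht : t < c - d) :
    ∫ x in (c - d)..(c + d), √((c + d - x) * (x - (c - d))) / (t - x)
      = π * (t - c + √((t - c) ^ 2 - d ^ 2)) := by
  have hneg : ∫ θ in (-(π / 2))..(π / 2), (t - c - d * sin θ)⁻¹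
      = -∫ θ in (-(π / 2))..(π / 2), (c - t - -d * sin θ)⁻¹ := by
    rw [← intervalIntegral.integral_neg]
    congr 1 with θ
    rw [← inv_neg]
    ring_nf
  rw [integral_sqrt_div_sub_eq hd fun h => h.1.not_gt ht, hneg,
    integral_inv_sub_mul_sin (by rw [abs_neg, abs_of_nonneg hd]; linarith),
    show (c - t) ^ 2 - (-d) ^ 2 = (t - c) ^ 2 - d ^ 2 by ring, mul_neg, mul_div_left_comm, div_sqrt]
  ring

theorem integral_sqrt_div_mul_sub {c d t : ℝ} (hd : 0 ≤ d) (hdc : d < c) (ht : c + d < t) :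
    ∫ x in (c - d)..(c + d), √((c + d - x) * (x - (c - d))) / (x * (x - t))
      = π * (√((t - c) ^ 2 - d ^ 2) - t + √(c ^ 2 - d ^ 2)) / t := by
  have htpos : 0 < t := by linarith
  have hint {s : ℝ} (hs : s ∉ Icc (c - d) (c + d)) :
      IntervalIntegrable (fun x => √((c + d - x) * (x - (c - d))) / (s - x)) volume
        (c - d) (c + d) :=
    ContinuousOn.intervalIntegrable <| by
      refine ContinuousOn.div (by fun_prop) (by fun_prop) fun x hx h => hs ?_
      rw [uIcc_of_le (by linarith)] at hx
      rwa [sub_eq_zero.1 h]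
  have h0 : (0 : ℝ) ∉ Icc (c - d) (c + d) := fun h => h.1.not_gt (by linarith)
  have ht' : t ∉ Icc (c - d) (c + d) := fun h => h.2.not_gt ht
  have hsplit : ∫ x in (c - d)..(c + d), √((c + d - x) * (x - (c - d))) / (x * (x - t))
      = ((∫ x in (c - d)..(c + d), √((c + d - x) * (x - (c - d))) / (0 - x))
        - ∫ x in (c - d)..(c + d), √((c + d - x) * (x - (c - d))) / (t - x)) / t := by
    rw [← integral_sub (hint h0) (hint ht'), ← intervalIntegral.integral_div]
    refine integral_congr fun x hx => ?_
    rw [uIcc_of_le (by linarith)] at hx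
    have hx0 : x ≠ 0 := fun h => h0 (h ▸ hx)
    have hxt : t - x ≠ 0 := sub_ne_zero.2 fun h => ht' (h ▸ hx)
    have hxt' : x - t ≠ 0 := sub_ne_zero.2 fun h => ht' (h ▸ hx)
    field_simp
    ring
  rw [hsplit, integral_sqrt_div_sub_of_lt hd ht, integral_sqrt_div_sub_of_gt hd (by linarith),
    zero_sub, neg_sq]
  ring

section IndicatorDensity

variable {a b : ℝ} {g : ℝ → ℝ}

theorem ContinuousOn.integrable_indicator_Icc (hg : ContinuousOn g (Icc a b)) :
    Integrable (indicator (Icc a b) g) :=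
  hg.integrableOn_Icc.integrable_indicator measurableSet_Icc

theorem isFiniteMeasure_withDensity_ofReal_indicator_Icc (hg : ContinuousOn g (Icc a b)) :
    IsFiniteMeasure (volume.withDensity fun x => ENNReal.ofReal (indicator (Icc a b) g x)) :=
  isFiniteMeasure_withDensity_ofReal hg.integrable_indicator_Icc.hasFiniteIntegral

theorem ae_mem_Icc_withDensity_ofReal_indicator (hg : ContinuousOn g (Icc a b)) :
    ∀ᵐ x ∂volume.withDensity (fun x => ENNReal.ofReal (indicator (Icc a b) g x)), x ∈ Icc a b := by
  rw [ae_withDensity_iff' hg.integrable_indicator_Icc.aemeasurable.ennreal_ofReal]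
  refine Eventually.of_forall fun x hx => ?_
  by_contra hxI
  simp [indicator_of_notMem hxI] at hx

theorem integral_withDensity_ofReal_indicator_Icc {E : Type*} [NormedAddCommGroup E]
    [NormedSpace ℝ E] (hab : a ≤ b) (hg : ContinuousOn g (Icc a b))
    (hg0 : ∀ x ∈ Icc a b, 0 ≤ g x) (f : ℝ → E) :
    ∫ x, f x ∂volume.withDensity (fun x => ENNReal.ofReal (indicator (Icc a b) g x))
      = ∫ x in a..b, g x • f x := by
  rw [integral_withDensity_eq_integral_toReal_smul₀
      hg.integrable_indicator_Icc.aemeasurable.ennreal_ofReal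
      (Eventually.of_forall fun _ => ENNReal.ofReal_lt_top),
    intervalIntegral.integral_of_le hab, ← integral_Icc_eq_integral_Ioc,
    ← MeasureTheory.integral_indicator measurableSet_Icc]
  congr 1 with x
  by_cases hx : x ∈ Icc a b
  · simp [indicator_of_mem hx, ENNReal.toReal_ofReal (hg0 x hx)]
  · simp [indicator_of_notMem hx]

end IndicatorDensity

theorem differentiableOn_integral_inv_ofReal_sub {μ : Measure ℝ} [IsFiniteMeasure μ] {K : Set ℝ}
    (hK : IsClosed K) (hμK : ∀ᵐ x ∂μ, x ∈ K) :
    DifferentiableOn ℂ (fun z => ∫ x, ((x : ℂ) - z)⁻¹ ∂μ) (((↑) : ℝ → ℂ) '' K)ᶜ := by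
  intro z₀ hz₀
  have hopen : IsOpen (((↑) : ℝ → ℂ) '' K)ᶜ :=
    (Complex.isUniformEmbedding_ofReal.isClosedEmbedding.isClosedMap K hK).isOpen_compl
  obtain ⟨ε, hε, hball⟩ := Metric.isOpen_iff.1 hopen z₀ hz₀
  have hdist : ∀ᵐ x : ℝ ∂μ, ∀ z ∈ Metric.ball z₀ (ε / 2), ε / 2 ≤ ‖(x : ℂ) - z‖ := by
    filter_upwards [hμK] with x hx z hz
    have hxz₀ : ε ≤ dist (x : ℂ) z₀ :=
      not_lt.1 fun h => hball (Metric.mem_ball.2 h) ⟨x, hx, rfl⟩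
    rw [← dist_eq_norm]
    linarith [dist_triangle (x : ℂ) z z₀, Metric.mem_ball.1 hz]
  have hmeas (z : ℂ) : AEStronglyMeasurable (fun x : ℝ => ((x : ℂ) - z)⁻¹) μ :=
    (Complex.measurable_ofReal.sub_const z).inv.aestronglyMeasurable
  have hε2 : 0 < ε / 2 := half_pos hε
  refine (hasDerivAt_integral_of_dominated_loc_of_deriv_le
    (F' := fun z x => (((x : ℂ) - z) ^ 2)⁻¹) (bound := fun _ => ((ε / 2) ^ 2)⁻¹)
    (Metric.ball_mem_nhds z₀ hε2) (Eventually.of_forall hmeas) ?_ ?_ ?_ (integrable_const _)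
    ?_).2.differentiableAt.differentiableWithinAt
  · refine (integrable_const (ε / 2)⁻¹).mono' (hmeas z₀) ?_
    filter_upwards [hdist] with x hx
    rw [norm_inv]
    exact inv_anti₀ hε2 (hx z₀ (Metric.mem_ball_self hε2))
  · exact ((Complex.measurable_ofReal.sub_const z₀).pow_const 2).inv.aestronglyMeasurable
  · filter_upwards [hdist] with x hx z hz
    rw [norm_inv, norm_pow]
    exact inv_anti₀ (by positivity) (pow_le_pow_left₀ hε2.le (hx z hz) 2)
  · filter_upwards [hdist] with x hx z hz
    have hne : (x : ℂ) - z ≠ 0 := norm_pos_iff.1 (hε2.trans_le (hx z hz))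
    exact (((hasDerivAt_id z).const_sub (x : ℂ)).inv hne).congr_deriv (by simp)

theorem isPreconnected_compl_ofReal_image_Icc (a b : ℝ) :
    IsPreconnected (((↑) : ℝ → ℂ) '' Icc a b)ᶜ := by
  have hslit : IsPreconnected Complex.slitPlane :=
    (Complex.starConvex_one_slitPlane.isPathConnected (by simp)).isConnected.isPreconnected
  have hright := (Homeomorph.subRight (b : ℂ)).isPreconnected_preimage.2 hslit
  have hleft := (Homeomorph.subLeft (a : ℂ)).isPreconnected_preimage.2 hslit
  have hI : Complex.I ∈ (Homeomorph.subRight (b : ℂ)) ⁻¹' Complex.slitPlane ∩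
      (Homeomorph.subLeft (a : ℂ)) ⁻¹' Complex.slitPlane := by
    simp [Complex.mem_slitPlane_iff]
  convert hright.union' ⟨_, hI⟩ hleft using 1
  ext z
  simp only [mem_compl_iff, mem_image, mem_Icc, Complex.ext_iff, Complex.ofReal_re,
    Complex.ofReal_im, mem_union, mem_preimage, Homeomorph.coe_subRight, Homeomorph.coe_subLeft,
    Complex.mem_slitPlane_iff, Complex.sub_re, Complex.sub_im, sub_pos, sub_zero, zero_sub,
    neg_ne_zero]
  constructor
  · intro h
    by_contra! h'
    exact h ⟨z.re, ⟨h'.2.1, h'.1.1⟩, rfl, h'.1.2.symm⟩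
  · rintro h ⟨x, ⟨hax, hxb⟩, rfl, him⟩
    rcases h with (h | h) | h | h
    exacts [hxb.not_gt h, h him.symm, hax.not_gt h, h him.symm]

theorem AnalyticOnNhd.eqOn_zero_of_forall_ofReal_gt {f : ℂ → ℂ} {U : Set ℂ}
    (hf : AnalyticOnNhd ℂ f U) (hU : IsPreconnected U) {a : ℝ} (haU : ∀ t, a < t → (t : ℂ) ∈ U)
    (hfa : ∀ t, a < t → f t = 0) : EqOn f 0 U := by
  have hlim : Tendsto ((↑) : ℝ → ℂ) (𝓝[>] (a + 1)) (𝓝[≠] ((a + 1 : ℝ) : ℂ)) :=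
    tendsto_nhdsWithin_iff.2 ⟨Complex.continuous_ofReal.continuousAt.tendsto.mono_left
      nhdsWithin_le_nhds, eventually_nhdsWithin_of_forall fun t ht =>
        (Complex.ofReal_injective.ne (ne_of_gt ht))⟩
  refine hf.eqOn_zero_of_preconnected_of_frequently_eq_zero hU (haU _ (lt_add_one a))
    (hlim.frequently (Eventually.frequently ?_))
  filter_upwards [self_mem_nhdsWithin] with t ht
  exact hfa t ((lt_add_one a).trans ht)

/-- The Marchenko–Pastur density with ratio `ρ`, before restriction to its support
`[(1 - √ρ)², (1 + √ρ)²]`. -/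
noncomputable def mpDensity (ρ x : ℝ) : ℝ :=
  √(((1 + √ρ) ^ 2 - x) * (x - (1 - √ρ) ^ 2)) / (2 * π * x)

noncomputable def mpMeasure (ρ : ℝ) : Measure ℝ :=
  volume.withDensity fun x =>
    ENNReal.ofReal (indicator (Icc ((1 - √ρ) ^ 2) ((1 + √ρ) ^ 2)) (mpDensity ρ) x)

/-- The root `(-b + √Δ) / (2a)` of `t s² + (t + 1 - ρ) s + 1`, whose discriminant `Δ` equals
`(t - (1 + ρ))² - 4ρ = (t - (1 - √ρ)²) (t - (1 + √ρ)²)`. -/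
noncomputable def mpStieltjesReal (ρ t : ℝ) : ℝ :=
  (√((t - (1 + ρ)) ^ 2 - 4 * ρ) - t + ρ - 1) / (2 * t)

section MarchenkoPastur

variable {ρ : ℝ}

theorem one_sub_sqrt_sq_pos (hρ : 1 < ρ) : 0 < (1 - √ρ) ^ 2 := by
  have : 1 < √ρ := by rw [lt_sqrt zero_le_one]; simpa
  nlinarith

theorem continuousOn_mpDensity (hρ : 1 < ρ) :
    ContinuousOn (mpDensity ρ) (Icc ((1 - √ρ) ^ 2) ((1 + √ρ) ^ 2)) := by
  refine ContinuousOn.div (by fun_prop) (by fun_prop) fun x hx => ?_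
  have : 0 < x := (one_sub_sqrt_sq_pos hρ).trans_le hx.1
  positivity

theorem mpDensity_nonneg (hρ : 1 < ρ) {x : ℝ} (hx : x ∈ Icc ((1 - √ρ) ^ 2) ((1 + √ρ) ^ 2)) :
    0 ≤ mpDensity ρ x := by
  have := (one_sub_sqrt_sq_pos hρ).trans_le hx.1
  unfold mpDensity
  positivity

theorem integral_mpDensity_mul_inv_sub (hρ : 1 < ρ) {t : ℝ} (ht : (1 + √ρ) ^ 2 < t) :
    ∫ x in (1 - √ρ) ^ 2..(1 + √ρ) ^ 2, mpDensity ρ x * (x - t)⁻¹ = mpStieltjesReal ρ t := by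
  have hρ0 : 0 ≤ ρ := by linarith
  have hsq : √ρ ^ 2 = ρ := sq_sqrt hρ0
  have hlm : (1 - √ρ) ^ 2 = 1 + ρ - 2 * √ρ := by linear_combination hsq
  have hlp : (1 + √ρ) ^ 2 = 1 + ρ + 2 * √ρ := by linear_combination hsq
  have hd : 0 ≤ 2 * √ρ := by positivity
  have hdc : 2 * √ρ < 1 + ρ := by linarith [one_sub_sqrt_sq_pos hρ]
  rw [hlp] at ht
  have hdens (x : ℝ) : mpDensity ρ x * (x - t)⁻¹ = (2 * π)⁻¹ *
      (√((1 + ρ + 2 * √ρ - x) * (x - (1 + ρ - 2 * √ρ))) / (x * (x - t))) := by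
    rw [mpDensity, hlm, hlp]
    field_simp
  simp_rw [hdens]
  rw [hlm, hlp, intervalIntegral.integral_const_mul, integral_sqrt_div_mul_sub hd hdc ht,
    mul_pow, sq_sqrt hρ0, show (2 : ℝ) ^ 2 = 4 by norm_num,
    show (1 + ρ) ^ 2 - 4 * ρ = (ρ - 1) ^ 2 by ring, sqrt_sq (by linarith), mpStieltjesReal]
  field_simp
  ring

theorem mpStieltjesReal_quadratic (hρ : 1 < ρ) {t : ℝ} (ht : (1 + √ρ) ^ 2 < t) :
    t * mpStieltjesReal ρ t ^ 2 + (t + 1 - ρ) * mpStieltjesReal ρ t + 1 = 0 := by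
  have hsq : √ρ ^ 2 = ρ := sq_sqrt (by linarith)
  have hgap : 2 * √ρ < t - (1 + ρ) := by
    linarith [show (1 + √ρ) ^ 2 = 1 + ρ + 2 * √ρ by linear_combination hsq]
  have hR : √((t - (1 + ρ)) ^ 2 - 4 * ρ) ^ 2 = (t - (1 + ρ)) ^ 2 - 4 * ρ :=
    sq_sqrt (by nlinarith [sqrt_nonneg ρ])
  have ht0 : t ≠ 0 := by nlinarith [sqrt_nonneg ρ]
  unfold mpStieltjesReal
  generalize √((t - (1 + ρ)) ^ 2 - 4 * ρ) = R at hR ⊢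
  field_simp
  linear_combination hR

theorem integral_inv_ofReal_sub_mpMeasure (hρ : 1 < ρ) {t : ℝ} (ht : (1 + √ρ) ^ 2 < t) :
    ∫ x, ((x : ℂ) - t)⁻¹ ∂mpMeasure ρ = mpStieltjesReal ρ t := by
  have hle : (1 - √ρ) ^ 2 ≤ (1 + √ρ) ^ 2 := by nlinarith [sqrt_nonneg ρ]
  rw [mpMeasure, integral_withDensity_ofReal_indicator_Icc hle (continuousOn_mpDensity hρ)
    (fun x hx => mpDensity_nonneg hρ hx), ← integral_mpDensity_mul_inv_sub hρ ht,
    ← intervalIntegral.integral_ofReal]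
  congr 1 with x
  push_cast
  rw [Complex.real_smul]

theorem differentiableOn_integral_inv_ofReal_sub_mpMeasure (hρ : 1 < ρ) :
    DifferentiableOn ℂ (fun z => ∫ x, ((x : ℂ) - z)⁻¹ ∂mpMeasure ρ)
      (((↑) : ℝ → ℂ) '' Icc ((1 - √ρ) ^ 2) ((1 + √ρ) ^ 2))ᶜ := by
  have : IsFiniteMeasure (mpMeasure ρ) :=
    isFiniteMeasure_withDensity_ofReal_indicator_Icc (continuousOn_mpDensity hρ)
  exact differentiableOn_integral_inv_ofReal_sub isClosed_Icc
    (ae_mem_Icc_withDensity_ofReal_indicator (continuousOn_mpDensity hρ))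

end MarchenkoPastur

/-- The Stieltjes transform `S(z) = ∫ (x - z)⁻¹ dμ_mp(x)` of the
Marchenko–Pastur-type measure with parameter `ρ̃ > 1` satisfies, for every
`z ∈ ℂ` outside the support `[λ₋, λ₊]`, the quadratic relation
`z S(z)² + (z + 1 - ρ̃) S(z) + 1 = 0`; equivalently, for `z ≠ 0` with
`1 + S(z) ≠ 0`, `S(z) = -1/z + (ρ̃/z) · S(z)/(1 + S(z))`. -/
theorem stmt10
    (ρt : ℝ) (hρt : 1 < ρt)
    (lm lp : ℝ) (hlm : lm = (1 - Real.sqrt ρt) ^ 2) (hlp : lp = (1 + Real.sqrt ρt) ^ 2)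
    (μ : Measure ℝ)
    (hμ : μ = volume.withDensity (fun x => ENNReal.ofReal
      (Set.indicator (Set.Icc lm lp)
        (fun y => Real.sqrt ((lp - y) * (y - lm)) / (2 * π * y)) x)))
    (S : ℂ → ℂ)
    (hS : ∀ z : ℂ, S z = ∫ x : ℝ, ((x : ℂ) - z)⁻¹ ∂μ) :
    ∀ z : ℂ, (¬ ∃ x : ℝ, x ∈ Set.Icc lm lp ∧ (x : ℂ) = z) →
      z * (S z) ^ 2 + (z + 1 - (ρt : ℂ)) * S z + 1 = 0 ∧
      (z ≠ 0 → 1 + S z ≠ 0 →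
        S z = -1 / z + ((ρt : ℂ) / z) * (S z / (1 + S z))) := by
  subst hlm hlp
  change μ = mpMeasure ρt at hμ
  subst hμ
  have hSdiff := funext hS ▸ differentiableOn_integral_inv_ofReal_sub_mpMeasure hρt
  have hopen : IsOpen (((↑) : ℝ → ℂ) '' Icc ((1 - √ρt) ^ 2) ((1 + √ρt) ^ 2))ᶜ :=
    (isCompact_Icc.image Complex.continuous_ofReal).isClosed.isOpen_compl
  have hreal (t : ℝ) (ht : (1 + √ρt) ^ 2 < t) :
      (t : ℂ) * S t ^ 2 + ((t : ℂ) + 1 - ρt) * S t + 1 = 0 := by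
    rw [hS, integral_inv_ofReal_sub_mpMeasure hρt ht]
    exact_mod_cast mpStieltjesReal_quadratic hρt ht
  have hQ := AnalyticOnNhd.eqOn_zero_of_forall_ofReal_gt
    (f := fun z => z * S z ^ 2 + (z + 1 - ρt) * S z + 1)
    ((by fun_prop : DifferentiableOn ℂ _ _).analyticOnNhd hopen)
    (isPreconnected_compl_ofReal_image_Icc _ _)
    (fun t ht ⟨x, hx, hxt⟩ => (Complex.ofReal_injective hxt ▸ ht).not_ge hx.2) hreal
  intro z hz
  have hQz : z * S z ^ 2 + (z + 1 - ρt) * S z + 1 = 0 := hQ hz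
  refine ⟨hQz, fun hz0 hS1 => ?_⟩
  field_simp
  linear_combination hQz
end
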